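/- arXiv:2407.20851 — 5 statements merged into one kernel-verified Lean document; each statement's English description precedes it below -/
import Mathlib

section
/- For a finite network G=(V,E,c) with distinct vertices a,z, and any antisymmetric flow θ from a to z and any function f:V→ℝ with gap_{A,B}(f) := min_{b∈B} f(b) − max_{a∈A} f(a) ≥ 0 for disjoint nonempty vertex sets A,B, the strength of θ times gap_{A,B}(f) is at most √(E(θ))·√(E(f)), where E(θ) = (1/2)∑_{e⃗} r(e)θ(e⃗)² and E(f) = (1/2)∑_{e⃗} c(e)(f(e⁺)−f(e⁻))². -/
open Finset

/-- Proposition 4.11 ("Skopenkov's trick"): for a finite network `(V, c)` with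
disjoint nonempty vertex sets `A`, `B`, any flow `θ` (divergence-free off `A ∪ B`)
and any `f : V → ℝ` with `gap_{A,B}(f) ≥ 0`, the strength of `θ` times the gap is
bounded by `√E(θ) · √E(f)`. -/
theorem stmt_0 {V : Type*} [Fintype V]
    (c : V → V → ℝ) (hsym : ∀ x y, c x y = c y x) (hnn : ∀ x y, 0 ≤ c x y)
    (a z : V) (haz : a ≠ z)
    (θ : V → V → ℝ) (hanti : ∀ x y, θ x y = - θ y x)
    (hsupp : ∀ x y, c x y = 0 → θ x y = 0)
    (f : V → ℝ) (A B : Finset V) (hA : A.Nonempty) (hB : B.Nonempty)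
    (hdisj : Disjoint A B)
    (hflow : ∀ x, x ∉ A → x ∉ B → ∑ y, θ x y = 0)
    (hgap : 0 ≤ B.inf' hB f - A.sup' hA f) :
    (∑ x ∈ A, ∑ y, θ x y) * (B.inf' hB f - A.sup' hA f) ≤
      Real.sqrt ((1/2) * ∑ x, ∑ y, (1 / c x y) * θ x y ^ 2) *
      Real.sqrt ((1/2) * ∑ x, ∑ y, c x y * (f y - f x) ^ 2) := by
  classical
  set MA := A.sup' hA f with hMA
  set mB := B.inf' hB f with hmB
  have hMAmB : MA ≤ mB := by linarith
  set g : V → ℝ := fun x => min (max (f x) MA) mB with hg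
  set S := ∑ x ∈ A, ∑ y, θ x y with hS
  have hgA : ∀ x ∈ A, g x = MA := by
    intro x hx
    have h1 : f x ≤ MA := le_sup' f hx
    simp [hg, max_eq_right h1, min_eq_left hMAmB]
  have hgB : ∀ x ∈ B, g x = mB := by
    intro x hx
    have h1 : mB ≤ f x := inf'_le f hx
    simp [hg, max_eq_left (hMAmB.trans h1), min_eq_right h1]
  -- total flow is zero
  have hT : ∑ x, ∑ y, θ x y = 0 := by
    have h2 : ∑ x, ∑ y, θ x y = - ∑ x, ∑ y, θ x y := by
      calc ∑ x, ∑ y, θ x y = ∑ y, ∑ x, θ x y := Finset.sum_comm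
        _ = ∑ y, ∑ x, -θ y x := by
            refine Finset.sum_congr rfl fun y _ => Finset.sum_congr rfl fun x _ => hanti x y
        _ = - ∑ x, ∑ y, θ x y := by simp
    linarith
  -- restrict divergence sums to A ∪ B
  have hrestrict : ∀ h : V → ℝ, ∑ x, (∑ y, θ x y) * h x =
      ∑ x ∈ A, (∑ y, θ x y) * h x + ∑ x ∈ B, (∑ y, θ x y) * h x := by
    intro h
    rw [← Finset.sum_union hdisj]
    refine (Finset.sum_subset (Finset.subset_univ _) fun x _ hx => ?_).symm
    rw [Finset.mem_union] at hx; push_neg at hx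
    rw [hflow x hx.1 hx.2, zero_mul]
  have hSB : ∑ x ∈ B, ∑ y, θ x y = -S := by
    have := hrestrict 1
    simp only [Pi.one_apply, mul_one] at this
    rw [hT] at this
    linarith
  have hdivA : ∑ x ∈ A, (∑ y, θ x y) * g x = S * MA := by
    rw [hS, Finset.sum_mul]
    exact Finset.sum_congr rfl fun x hx => by rw [hgA x hx]
  have hdivB : ∑ x ∈ B, (∑ y, θ x y) * g x = -S * mB := by
    rw [show (-S) * mB = (∑ x ∈ B, ∑ y, θ x y) * mB by rw [hSB], Finset.sum_mul]
    exact Finset.sum_congr rfl fun x hx => by rw [hgB x hx]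
  have hdiv : ∑ x, ∑ y, θ x y * g x = S * MA - S * mB := by
    have : ∑ x, ∑ y, θ x y * g x = ∑ x, (∑ y, θ x y) * g x := by
      refine Finset.sum_congr rfl fun x _ => ?_
      rw [Finset.sum_mul]
    rw [this, hrestrict g, hdivA, hdivB]; ring
  have hdiv' : ∑ x, ∑ y, θ x y * g y = -(S * MA - S * mB) := by
    calc ∑ x, ∑ y, θ x y * g y = ∑ y, ∑ x, θ x y * g y := Finset.sum_comm
      _ = ∑ y, ∑ x, -(θ y x * g y) := by
          refine Finset.sum_congr rfl fun y _ => Finset.sum_congr rfl fun x _ => ?_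
          rw [hanti x y]; ring
      _ = -∑ y, ∑ x, θ y x * g y := by simp
      _ = -(S * MA - S * mB) := by rw [← hdiv]
  -- the key identity
  have hkey : ∑ x, ∑ y, θ x y * (g y - g x) = 2 * (S * (mB - MA)) := by
    have : ∑ x, ∑ y, θ x y * (g y - g x)
        = (∑ x, ∑ y, θ x y * g y) - ∑ x, ∑ y, θ x y * g x := by
      rw [← Finset.sum_sub_distrib]
      refine Finset.sum_congr rfl fun x _ => ?_
      rw [← Finset.sum_sub_distrib]
      exact Finset.sum_congr rfl fun y _ => by ring
    rw [this, hdiv, hdiv']; ring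
  -- Cauchy–Schwarz setup
  set u : V × V → ℝ := fun p => Real.sqrt (1 / c p.1 p.2) * θ p.1 p.2 with hu
  set v : V × V → ℝ := fun p => Real.sqrt (c p.1 p.2) * (g p.2 - g p.1) with hv
  have huv : ∀ p : V × V, u p * v p = θ p.1 p.2 * (g p.2 - g p.1) := by
    intro p
    by_cases hc : c p.1 p.2 = 0
    · simp [hu, hv, hc, hsupp _ _ hc]
    · have h1 : Real.sqrt (1 / c p.1 p.2) * Real.sqrt (c p.1 p.2) = 1 := by
        rw [← Real.sqrt_mul (one_div_nonneg.mpr (hnn _ _)), one_div,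
          inv_mul_cancel₀ hc, Real.sqrt_one]
      calc u p * v p = (Real.sqrt (1 / c p.1 p.2) * Real.sqrt (c p.1 p.2)) *
            (θ p.1 p.2 * (g p.2 - g p.1)) := by rw [hu, hv]; ring
        _ = θ p.1 p.2 * (g p.2 - g p.1) := by rw [h1, one_mul]
  have hu2 : ∀ p : V × V, u p ^ 2 = (1 / c p.1 p.2) * θ p.1 p.2 ^ 2 := by
    intro p
    rw [hu, mul_pow, Real.sq_sqrt (one_div_nonneg.mpr (hnn _ _))]
  have hv2 : ∀ p : V × V, v p ^ 2 = c p.1 p.2 * (g p.2 - g p.1) ^ 2 := by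
    intro p
    rw [hv, mul_pow, Real.sq_sqrt (hnn _ _)]
  -- clamp is 1-Lipschitz
  have hlip : ∀ x y : V, (g y - g x) ^ 2 ≤ (f y - f x) ^ 2 := by
    intro x y
    have h1 : |g y - g x| ≤ |f y - f x| := by
      calc |g y - g x| ≤ max |max (f y) MA - max (f x) MA| |mB - mB| :=
            abs_min_sub_min_le_max _ _ _ _
        _ = |max (f y) MA - max (f x) MA| := by simp
        _ ≤ |f y - f x| := abs_max_sub_max_le_abs _ _ _
    calc (g y - g x) ^ 2 = |g y - g x| ^ 2 := (sq_abs _).symm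
      _ ≤ |f y - f x| ^ 2 := by
          exact pow_le_pow_left₀ (abs_nonneg _) h1 2
      _ = (f y - f x) ^ 2 := sq_abs _
  -- assemble
  have hsum_uv : ∑ p : V × V, u p * v p = 2 * (S * (mB - MA)) := by
    rw [← hkey, Fintype.sum_prod_type]
    exact Finset.sum_congr rfl fun x _ => Finset.sum_congr rfl fun y _ => huv (x, y)
  have hsum_u2 : ∑ p : V × V, u p ^ 2 = ∑ x, ∑ y, (1 / c x y) * θ x y ^ 2 := by
    rw [Fintype.sum_prod_type]
    exact Finset.sum_congr rfl fun x _ => Finset.sum_congr rfl fun y _ => hu2 (x, y)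
  have hsum_v2 : ∑ p : V × V, v p ^ 2 ≤ ∑ x, ∑ y, c x y * (f y - f x) ^ 2 := by
    rw [Fintype.sum_prod_type]
    refine Finset.sum_le_sum fun x _ => Finset.sum_le_sum fun y _ => ?_
    rw [hv2 (x, y)]
    exact mul_le_mul_of_nonneg_left (hlip x y) (hnn x y)
  have hcs : ∑ p : V × V, u p * v p ≤
      Real.sqrt (∑ p, u p ^ 2) * Real.sqrt (∑ p, v p ^ 2) :=
    Real.sum_mul_le_sqrt_mul_sqrt _ _ _
  have hX : (0:ℝ) ≤ ∑ p : V × V, u p ^ 2 := Finset.sum_nonneg fun p _ => sq_nonneg _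
  have hY : (0:ℝ) ≤ ∑ p : V × V, v p ^ 2 := Finset.sum_nonneg fun p _ => sq_nonneg _
  have hhalf : Real.sqrt (1/2) * Real.sqrt (1/2) = 1/2 :=
    Real.mul_self_sqrt (by norm_num)
  calc S * (mB - MA) = (1/2) * (2 * (S * (mB - MA))) := by ring
    _ = (1/2) * ∑ p : V × V, u p * v p := by rw [hsum_uv]
    _ ≤ (1/2) * (Real.sqrt (∑ p, u p ^ 2) * Real.sqrt (∑ p, v p ^ 2)) := by
        exact mul_le_mul_of_nonneg_left hcs (by norm_num)
    _ = Real.sqrt ((1/2) * ∑ p : V × V, u p ^ 2) *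
        Real.sqrt ((1/2) * ∑ p : V × V, v p ^ 2) := by
        rw [Real.sqrt_mul (by norm_num), Real.sqrt_mul (by norm_num)]
        rw [show Real.sqrt (1/2) * Real.sqrt (∑ p : V × V, u p ^ 2) *
            (Real.sqrt (1/2) * Real.sqrt (∑ p : V × V, v p ^ 2)) =
            (Real.sqrt (1/2) * Real.sqrt (1/2)) *
            (Real.sqrt (∑ p : V × V, u p ^ 2) * Real.sqrt (∑ p : V × V, v p ^ 2)) by ring,
          hhalf]
    _ ≤ Real.sqrt ((1/2) * ∑ x, ∑ y, (1 / c x y) * θ x y ^ 2) *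
        Real.sqrt ((1/2) * ∑ x, ∑ y, c x y * (f y - f x) ^ 2) := by
        refine mul_le_mul ?_ ?_ (Real.sqrt_nonneg _) (Real.sqrt_nonneg _)
        · rw [hsum_u2]
        · refine Real.sqrt_le_sqrt ?_
          exact mul_le_mul_of_nonneg_left hsum_v2 (by norm_num)
end

section
/- The extremal metric for the extremal length of a nonempty path family Γ in a finite network is unique up to a positive scalar multiple: if ρ₁ and ρ₂ are both nonzero metrics achieving λ(Γ,G) = ℓ²(ρ,Γ)/A(ρ), then ρ₂ = t·ρ₁ for some t > 0. -/
/-!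
If `ρ₁` and `ρ₂` are extremal, rescale them to `a = ℓ(ρ₂) ρ₁` and `b = ℓ(ρ₁) ρ₂`, which are
extremal with the same length `m`, so `λ A(a) = λ A(b) = m²`. Since `ℓ` is superadditive,
`ℓ(a + b) ≥ 2m`, and `λ` being the supremum of `ℓ²/A` gives `4 m² ≤ λ A(a + b)`. The
parallelogram law for the quadratic form `A` then yields
`λ A(a - b) = 2 λ A(a) + 2 λ A(b) - λ A(a + b) ≤ 0`, so `a = b`.
-/

open Finset

namespace ExtremalLength

variable {E : Type*}

def minPathLength (Γ : Finset (Multiset E)) (hΓ : Γ.Nonempty) (ρ : E → ℝ) : ℝ :=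
  Γ.inf' hΓ fun γ => (γ.map ρ).sum

def area [Fintype E] (c ρ : E → ℝ) : ℝ :=
  ∑ e, c e * ρ e ^ 2

noncomputable def extremalLength [Fintype E] (c : E → ℝ) (Γ : Finset (Multiset E))
    (hΓ : Γ.Nonempty) : ℝ :=
  sSup {q : ℝ | ∃ ρ : E → ℝ, (∀ e, 0 ≤ ρ e) ∧ ρ ≠ 0 ∧
    q = minPathLength Γ hΓ ρ ^ 2 / area c ρ}

section Area

variable [Fintype E] {c : E → ℝ}

theorem area_smul (ρ : E → ℝ) (t : ℝ) : area c (t • ρ) = t ^ 2 * area c ρ := by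
  simp only [area, mul_sum, Pi.smul_apply, smul_eq_mul]
  exact sum_congr rfl fun e _ => by ring

theorem area_add_add_area_sub (ρ σ : E → ℝ) :
    area c (ρ + σ) + area c (ρ - σ) = 2 * area c ρ + 2 * area c σ := by
  simp only [area, mul_sum, ← sum_add_distrib, Pi.add_apply, Pi.sub_apply]
  exact sum_congr rfl fun e _ => by ring

theorem area_pos (hc : ∀ e, 0 < c e) {ρ : E → ℝ} (hρ : ρ ≠ 0) : 0 < area c ρ := by
  obtain ⟨e, he⟩ := Function.ne_iff.mp hρ
  exact sum_pos' (fun i _ => mul_nonneg (hc i).le (sq_nonneg _))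
    ⟨e, mem_univ e, mul_pos (hc e) (sq_pos_of_ne_zero he)⟩

theorem eq_zero_of_area_nonpos (hc : ∀ e, 0 < c e) {ρ : E → ℝ} (h : area c ρ ≤ 0) : ρ = 0 := by
  by_contra hρ
  exact (area_pos hc hρ).not_ge h

end Area

section MinPathLength

variable {Γ : Finset (Multiset E)} (hΓ : Γ.Nonempty)

theorem minPathLength_nonneg {ρ : E → ℝ} (hρ : ∀ e, 0 ≤ ρ e) : 0 ≤ minPathLength Γ hΓ ρ :=
  le_inf' _ _ fun γ _ => Multiset.sum_nonneg fun x hx => by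
    obtain ⟨e, -, rfl⟩ := Multiset.mem_map.mp hx
    exact hρ e

theorem minPathLength_smul (ρ : E → ℝ) {t : ℝ} (ht : 0 ≤ t) :
    minPathLength Γ hΓ (t • ρ) = t * minPathLength Γ hΓ ρ := by
  rw [minPathLength, minPathLength, apply_inf'_eq_inf'_comp hΓ (t * ·)
    fun x y => mul_min_of_nonneg x y ht]
  exact inf'_congr hΓ rfl fun γ _ => Multiset.sum_map_mul_left

theorem add_minPathLength_le (ρ σ : E → ℝ) :
    minPathLength Γ hΓ ρ + minPathLength Γ hΓ σ ≤ minPathLength Γ hΓ (ρ + σ) :=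
  le_inf' _ _ fun γ hγ => by
    rw [Pi.add_def, Multiset.sum_map_add]
    exact add_le_add (inf'_le _ hγ) (inf'_le _ hγ)

theorem one_le_minPathLength_one (hne : ∀ γ ∈ Γ, γ ≠ 0) : 1 ≤ minPathLength Γ hΓ 1 :=
  le_inf' _ _ fun γ hγ => by
    simpa [Nat.one_le_iff_ne_zero] using hne γ hγ

end MinPathLength

section Bounds

variable [Fintype E] {c : E → ℝ} {Γ : Finset (Multiset E)} {hΓ : Γ.Nonempty}

theorem sq_sum_map_le_mul_area [DecidableEq E] (hc : ∀ e, 0 < c e) (γ : Multiset E) (ρ : E → ℝ) :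
    (γ.map ρ).sum ^ 2 ≤ (∑ e, (γ.count e : ℝ) ^ 2 / c e) * area c ρ := by
  have hcount : (γ.map ρ).sum = ∑ e, (γ.count e : ℝ) * ρ e := by
    rw [sum_multiset_map_count, sum_subset (subset_univ _) fun e _ he => by
      simp [Multiset.count_eq_zero_of_notMem (by simpa using he)]]
    simp only [nsmul_eq_mul]
  rw [hcount]
  refine sum_sq_le_sum_mul_sum_of_sq_le_mul _ (fun e _ => by have := hc e; positivity)
    (fun e _ => mul_nonneg (hc e).le (sq_nonneg _)) fun e _ => le_of_eq ?_
  field_simp [(hc e).ne']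

theorem bddAbove_ratios (hc : ∀ e, 0 < c e) :
    BddAbove {q : ℝ | ∃ ρ : E → ℝ, (∀ e, 0 ≤ ρ e) ∧ ρ ≠ 0 ∧
      q = minPathLength Γ hΓ ρ ^ 2 / area c ρ} := by
  classical
  obtain ⟨γ₀, hγ₀⟩ := id hΓ
  refine ⟨∑ e, (γ₀.count e : ℝ) ^ 2 / c e, ?_⟩
  rintro q ⟨ρ, hρ, hρ0, rfl⟩
  rw [div_le_iff₀ (area_pos hc hρ0)]
  calc minPathLength Γ hΓ ρ ^ 2 ≤ (γ₀.map ρ).sum ^ 2 :=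
        pow_le_pow_left₀ (minPathLength_nonneg hΓ hρ) (inf'_le _ hγ₀) 2
    _ ≤ _ := sq_sum_map_le_mul_area hc γ₀ ρ

theorem sq_minPathLength_le_extremalLength_mul_area (hc : ∀ e, 0 < c e) {ρ : E → ℝ}
    (hρ : ∀ e, 0 ≤ ρ e) :
    minPathLength Γ hΓ ρ ^ 2 ≤ extremalLength c Γ hΓ * area c ρ := by
  rcases eq_or_ne ρ 0 with rfl | hρ0
  · simp [minPathLength, area]
  rw [← div_le_iff₀ (area_pos hc hρ0)]
  exact le_csSup (bddAbove_ratios hc) ⟨ρ, hρ, hρ0, rfl⟩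

theorem extremalLength_pos (hc : ∀ e, 0 < c e) (hne : ∀ γ ∈ Γ, γ ≠ 0) :
    0 < extremalLength c Γ hΓ := by
  obtain ⟨γ, hγ⟩ := id hΓ
  obtain ⟨e, -⟩ := Multiset.exists_mem_of_ne_zero (hne γ hγ)
  have hone : (1 : E → ℝ) ≠ 0 := Function.ne_iff.mpr ⟨e, one_ne_zero⟩
  have hA := area_pos hc hone
  have hℓ := one_le_minPathLength_one hΓ hne
  calc 0 < minPathLength Γ hΓ 1 ^ 2 / area c 1 := by positivity
    _ ≤ _ := le_csSup (bddAbove_ratios hc) ⟨1, fun _ => zero_le_one, hone, rfl⟩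

end Bounds

section Extremal

variable [Fintype E] {c : E → ℝ} {Γ : Finset (Multiset E)} {hΓ : Γ.Nonempty}

def IsExtremal (c : E → ℝ) (Γ : Finset (Multiset E)) (hΓ : Γ.Nonempty) (ρ : E → ℝ) : Prop :=
  (∀ e, 0 ≤ ρ e) ∧ minPathLength Γ hΓ ρ ^ 2 = extremalLength c Γ hΓ * area c ρ

theorem isExtremal_of_ratio_eq {ρ : E → ℝ} (hρ : ∀ e, 0 ≤ ρ e)
    (hlam : extremalLength c Γ hΓ ≠ 0)
    (h : minPathLength Γ hΓ ρ ^ 2 / area c ρ = extremalLength c Γ hΓ) :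
    IsExtremal c Γ hΓ ρ := by
  have hA : area c ρ ≠ 0 := by
    rintro hA
    rw [hA, div_zero] at h
    exact hlam h.symm
  exact ⟨hρ, by rw [← h, div_mul_cancel₀ _ hA]⟩

theorem minPathLength_pos_of_ratio_eq {ρ : E → ℝ} (hρ : ∀ e, 0 ≤ ρ e)
    (hlam : extremalLength c Γ hΓ ≠ 0)
    (h : minPathLength Γ hΓ ρ ^ 2 / area c ρ = extremalLength c Γ hΓ) :
    0 < minPathLength Γ hΓ ρ :=
  (minPathLength_nonneg hΓ hρ).lt_of_ne fun h0 => by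
    rw [← h0, sq, zero_mul, zero_div] at h
    exact hlam h.symm

theorem IsExtremal.smul {ρ : E → ℝ} (h : IsExtremal c Γ hΓ ρ) {t : ℝ} (ht : 0 ≤ t) :
    IsExtremal c Γ hΓ (t • ρ) := by
  refine ⟨fun e => mul_nonneg ht (h.1 e), ?_⟩
  rw [minPathLength_smul hΓ ρ ht, area_smul, mul_pow, h.2]
  ring

theorem IsExtremal.eq_of_minPathLength_eq (hc : ∀ e, 0 < c e)
    (hlam : 0 < extremalLength c Γ hΓ) {ρ σ : E → ℝ}
    (hρ : IsExtremal c Γ hΓ ρ) (hσ : IsExtremal c Γ hΓ σ)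
    (hℓ : minPathLength Γ hΓ ρ = minPathLength Γ hΓ σ) : ρ = σ := by
  set m := minPathLength Γ hΓ ρ
  have hsum : 2 * m ≤ minPathLength Γ hΓ (ρ + σ) := by
    linarith [add_minPathLength_le hΓ ρ σ]
  have hsum_sq : (2 * m) ^ 2 ≤ extremalLength c Γ hΓ * area c (ρ + σ) :=
    (pow_le_pow_left₀ (by linarith [minPathLength_nonneg hΓ hρ.1]) hsum 2).trans
      (sq_minPathLength_le_extremalLength_mul_area hc fun e => add_nonneg (hρ.1 e) (hσ.1 e))
  have hdiff : extremalLength c Γ hΓ * area c (ρ - σ) ≤ 0 := by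
    calc extremalLength c Γ hΓ * area c (ρ - σ)
        = 2 * (extremalLength c Γ hΓ * area c ρ) + 2 * (extremalLength c Γ hΓ * area c σ)
          - extremalLength c Γ hΓ * area c (ρ + σ) := by
          linear_combination extremalLength c Γ hΓ * area_add_add_area_sub (c := c) ρ σ
      _ ≤ 2 * m ^ 2 + 2 * m ^ 2 - (2 * m) ^ 2 := by
          rw [← hρ.2, ← hσ.2, ← hℓ]
          linarith
      _ = 0 := by ring
  exact sub_eq_zero.mp (eq_zero_of_area_nonpos hc (nonpos_of_mul_nonpos_right hdiff hlam))

end Extremal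

end ExtremalLength

open ExtremalLength in
theorem stmt_4_general {E : Type*} [Fintype E]
    (c : E → ℝ) (hc : ∀ e, 0 < c e)
    (Γ : Finset (Multiset E)) (hΓ : Γ.Nonempty) (hne : ∀ γ ∈ Γ, γ ≠ 0)
    (ρ₁ ρ₂ : E → ℝ)
    (h₁nn : ∀ e, 0 ≤ ρ₁ e) (h₂nn : ∀ e, 0 ≤ ρ₂ e)
    (h₁ : (Γ.inf' hΓ fun γ => (γ.map ρ₁).sum) ^ 2 / (∑ e, c e * ρ₁ e ^ 2)
        = sSup {q : ℝ | ∃ ρ : E → ℝ, (∀ e, 0 ≤ ρ e) ∧ ρ ≠ 0 ∧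
            q = (Γ.inf' hΓ fun γ => (γ.map ρ).sum) ^ 2 / (∑ e, c e * ρ e ^ 2)})
    (h₂ : (Γ.inf' hΓ fun γ => (γ.map ρ₂).sum) ^ 2 / (∑ e, c e * ρ₂ e ^ 2)
        = sSup {q : ℝ | ∃ ρ : E → ℝ, (∀ e, 0 ≤ ρ e) ∧ ρ ≠ 0 ∧
            q = (Γ.inf' hΓ fun γ => (γ.map ρ).sum) ^ 2 / (∑ e, c e * ρ e ^ 2)}) :
    ∃ t : ℝ, 0 < t ∧ ∀ e, ρ₂ e = t * ρ₁ e := by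
  have hlam : 0 < extremalLength c Γ hΓ := extremalLength_pos hc hne
  set ℓ₁ := minPathLength Γ hΓ ρ₁
  set ℓ₂ := minPathLength Γ hΓ ρ₂
  have hℓ₁ : 0 < ℓ₁ := minPathLength_pos_of_ratio_eq h₁nn hlam.ne' h₁
  have hℓ₂ : 0 < ℓ₂ := minPathLength_pos_of_ratio_eq h₂nn hlam.ne' h₂
  have hscaled : ℓ₂ • ρ₁ = ℓ₁ • ρ₂ :=
    ((isExtremal_of_ratio_eq h₁nn hlam.ne' h₁).smul hℓ₂.le).eq_of_minPathLength_eq hc hlam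
      ((isExtremal_of_ratio_eq h₂nn hlam.ne' h₂).smul hℓ₁.le)
      (by rw [minPathLength_smul hΓ _ hℓ₂.le, minPathLength_smul hΓ _ hℓ₁.le, mul_comm])
  refine ⟨ℓ₂ / ℓ₁, div_pos hℓ₂ hℓ₁, fun e => ?_⟩
  have he := congrFun hscaled e
  simp only [Pi.smul_apply, smul_eq_mul] at he
  field_simp
  linarith

/-- Uniqueness of the extremal metric up to a positive scalar: if `ρ₁` and `ρ₂`
are nonzero nonnegative metrics both achieving the extremal length
`λ(Γ,G) = sup_ρ ℓ(ρ,Γ)²/A(ρ)` of a nonempty family `Γ` of paths (nonempty edge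
multisets), then `ρ₂ = t • ρ₁` for some `t > 0`. -/
theorem stmt_4 {E : Type*} [Fintype E]
    (c : E → ℝ) (hc : ∀ e, 0 < c e)
    (Γ : Finset (Multiset E)) (hΓ : Γ.Nonempty) (hne : ∀ γ ∈ Γ, γ ≠ 0)
    (ρ₁ ρ₂ : E → ℝ)
    (h₁nn : ∀ e, 0 ≤ ρ₁ e) (h₂nn : ∀ e, 0 ≤ ρ₂ e)
    (h₁0 : ρ₁ ≠ 0) (h₂0 : ρ₂ ≠ 0)
    (h₁ : (Γ.inf' hΓ fun γ => (γ.map ρ₁).sum) ^ 2 / (∑ e, c e * ρ₁ e ^ 2)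
        = sSup {q : ℝ | ∃ ρ : E → ℝ, (∀ e, 0 ≤ ρ e) ∧ ρ ≠ 0 ∧
            q = (Γ.inf' hΓ fun γ => (γ.map ρ).sum) ^ 2 / (∑ e, c e * ρ e ^ 2)})
    (h₂ : (Γ.inf' hΓ fun γ => (γ.map ρ₂).sum) ^ 2 / (∑ e, c e * ρ₂ e ^ 2)
        = sSup {q : ℝ | ∃ ρ : E → ℝ, (∀ e, 0 ≤ ρ e) ∧ ρ ≠ 0 ∧
            q = (Γ.inf' hΓ fun γ => (γ.map ρ).sum) ^ 2 / (∑ e, c e * ρ e ^ 2)}) :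
    ∃ t : ℝ, 0 < t ∧ ∀ e, ρ₂ e = t * ρ₁ e :=
  stmt_4_general c hc Γ hΓ hne ρ₁ ρ₂ h₁nn h₂nn h₁ h₂
end

section
/- Dirichlet's principle: in a finite connected network G with distinct vertices a,z, the effective resistance R_eff(a↔z;G) equals the supremum of 1/E(h) over all functions h:V→ℝ with h(a)=0 and h(z)=1, where E(h) = (1/2)∑_{e⃗} c(e)(h(e⁺)−h(e⁻))². -/
/-!
Write `u` for the voltage `h₀` rescaled so that `u a = 0` and `u z = 1`. Summation by parts
(Green's formula) turns the energy of a perturbation `u + g` with `g a = g z = 0` into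
`E(u) + E(g)`, because the cross term pairs `g` with the Laplacian of `u`, which vanishes off
`{a, z}`. So `u` minimises the energy among functions with these boundary values, and the same
formula gives `E(u) = Δu(a)`, the strength of the unit-voltage current. Connectivity makes the
energy of a nonconstant function positive, so everything can be inverted.
-/

open Finset

section Network

variable {V : Type*} [Fintype V]

def laplacian (c : V → V → ℝ) (f : V → ℝ) (x : V) : ℝ :=
  ∑ y, c x y * (f y - f x)

/-- Twice the paper's `E(f)`: the sum runs over ordered pairs, so every edge is counted twice. -/
def energy (c : V → V → ℝ) (f : V → ℝ) : ℝ :=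
  ∑ x, ∑ y, c x y * (f y - f x) ^ 2

variable {c : V → V → ℝ}

theorem sum_sum_mul_comm_of_symm (hsym : ∀ x y, c x y = c y x) (F : V → V → ℝ) :
    ∑ x, ∑ y, c x y * F x y = ∑ x, ∑ y, c x y * F y x := by
  rw [Finset.sum_comm]
  simp only [hsym]

theorem green_formula (hsym : ∀ x y, c x y = c y x) (f g : V → ℝ) :
    ∑ x, ∑ y, c x y * ((f y - f x) * (g y - g x)) = -2 * ∑ x, g x * laplacian c f x := by
  have hswap : ∑ x, ∑ y, c x y * ((f y - f x) * g y) = -∑ x, g x * laplacian c f x := by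
    rw [sum_sum_mul_comm_of_symm hsym]
    simp only [laplacian, mul_sum, ← sum_neg_distrib]
    exact sum_congr rfl fun x _ => sum_congr rfl fun y _ => by ring
  calc ∑ x, ∑ y, c x y * ((f y - f x) * (g y - g x))
      = ∑ x, ∑ y, c x y * ((f y - f x) * g y) - ∑ x, g x * laplacian c f x := by
        simp only [laplacian, mul_sum, ← sum_sub_distrib]
        exact sum_congr rfl fun x _ => sum_congr rfl fun y _ => by ring
    _ = -2 * ∑ x, g x * laplacian c f x := by rw [hswap]; ring

theorem energy_add (hsym : ∀ x y, c x y = c y x) (f g : V → ℝ) :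
    energy c (f + g) = energy c f - 4 * ∑ x, g x * laplacian c f x + energy c g := by
  have hexpand : energy c (f + g) = energy c f
      + 2 * ∑ x, ∑ y, c x y * ((f y - f x) * (g y - g x)) + energy c g := by
    simp only [energy, mul_sum, ← sum_add_distrib, Pi.add_apply]
    exact sum_congr rfl fun x _ => sum_congr rfl fun y _ => by ring
  rw [hexpand, green_formula hsym]
  ring

theorem energy_eq_neg_two_mul_sum (hsym : ∀ x y, c x y = c y x) (f : V → ℝ) :
    energy c f = -2 * ∑ x, f x * laplacian c f x := by
  rw [← green_formula hsym]
  exact sum_congr rfl fun x _ => sum_congr rfl fun y _ => by ring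

theorem energy_nonneg (hnn : ∀ x y, 0 ≤ c x y) (f : V → ℝ) : 0 ≤ energy c f :=
  sum_nonneg fun x _ => sum_nonneg fun y _ => mul_nonneg (hnn x y) (sq_nonneg _)

theorem apply_eq_of_energy_eq_zero (hnn : ∀ x y, 0 ≤ c x y) {f : V → ℝ}
    (hf : energy c f = 0) {x y : V} (hxy : 0 < c x y) : f x = f y := by
  have hterm_nonneg : ∀ x y, 0 ≤ c x y * (f y - f x) ^ 2 :=
    fun x y => mul_nonneg (hnn x y) (sq_nonneg _)
  have hrow := (sum_eq_zero_iff_of_nonneg fun x _ => sum_nonneg fun y _ => hterm_nonneg x y).1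
    hf x (mem_univ x)
  have hterm := (sum_eq_zero_iff_of_nonneg fun y _ => hterm_nonneg x y).1 hrow y (mem_univ y)
  rcases mul_eq_zero.1 hterm with hc | hsq
  · exact absurd hc hxy.ne'
  · linarith [pow_eq_zero_iff two_ne_zero |>.1 hsq]

theorem energy_pos (hnn : ∀ x y, 0 ≤ c x y)
    (hconn : ∀ x y : V, Relation.ReflTransGen (fun u v => 0 < c u v) x y)
    {f : V → ℝ} {u v : V} (huv : f u ≠ f v) : 0 < energy c f := by
  refine (energy_nonneg hnn f).lt_of_ne fun hzero => huv ?_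
  have hpath := hconn u v
  clear huv
  induction hpath with
  | refl => rfl
  | tail _ hedge ih => exact ih.trans (apply_eq_of_energy_eq_zero hnn hzero.symm hedge)

theorem laplacian_div_sub (f : V → ℝ) (t d : ℝ) (x : V) :
    laplacian c (fun y => (f y - t) / d) x = laplacian c f x / d := by
  simp only [laplacian, sum_div]
  exact sum_congr rfl fun y _ => by ring

theorem sum_laplacian_eq_zero (hsym : ∀ x y, c x y = c y x) (f : V → ℝ) :
    ∑ x, laplacian c f x = 0 := by
  have h := green_formula hsym f fun _ => 1
  simp only [sub_self, mul_zero, sum_const_zero, one_mul] at h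
  linarith

section HarmonicOff

variable {a z : V} {f : V → ℝ} (hharm : ∀ x, x ≠ a → x ≠ z → laplacian c f x = 0)
include hharm

theorem sum_mul_laplacian_of_harmonicOff (haz : a ≠ z) (g : V → ℝ) :
    ∑ x, g x * laplacian c f x = g a * laplacian c f a + g z * laplacian c f z := by
  classical
  rw [← sum_pair (f := fun x => g x * laplacian c f x) haz]
  refine (sum_subset (subset_univ _) fun x _ hx => ?_).symm
  simp only [mem_insert, mem_singleton, not_or] at hx
  rw [hharm x hx.1 hx.2, mul_zero]

theorem laplacian_eq_neg_of_harmonicOff (hsym : ∀ x y, c x y = c y x) (haz : a ≠ z) :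
    laplacian c f z = -laplacian c f a := by
  have h := sum_mul_laplacian_of_harmonicOff hharm haz fun _ => 1
  simp only [one_mul, sum_laplacian_eq_zero hsym] at h
  linarith

theorem energy_eq_of_harmonicOff (hsym : ∀ x y, c x y = c y x) (haz : a ≠ z) :
    energy c f = 2 * (f z - f a) * laplacian c f a := by
  rw [energy_eq_neg_two_mul_sum hsym, sum_mul_laplacian_of_harmonicOff hharm haz,
    laplacian_eq_neg_of_harmonicOff hharm hsym haz]
  ring

theorem energy_le_of_harmonicOff (hsym : ∀ x y, c x y = c y x) (hnn : ∀ x y, 0 ≤ c x y)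
    {h : V → ℝ} (ha : h a = f a) (hz : h z = f z) : energy c f ≤ energy c h := by
  have hcross : ∑ x, (h - f) x * laplacian c f x = 0 := by
    refine sum_eq_zero fun x _ => ?_
    by_cases hxa : x = a
    · simp [hxa, ha]
    by_cases hxz : x = z
    · simp [hxz, hz]
    rw [hharm x hxa hxz, mul_zero]
  have hsplit := energy_add hsym f (h - f)
  rw [add_sub_cancel, hcross] at hsplit
  linarith [energy_nonneg hnn (h - f)]

theorem isGreatest_inv_half_energy_of_harmonicOff (hsym : ∀ x y, c x y = c y x)
    (hnn : ∀ x y, 0 ≤ c x y)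
    (hconn : ∀ x y : V, Relation.ReflTransGen (fun u v => 0 < c u v) x y)
    (ha : f a = 0) (hz : f z = 1) :
    IsGreatest {q : ℝ | ∃ h : V → ℝ, h a = 0 ∧ h z = 1 ∧ q = 1 / ((1 / 2) * energy c h)}
      (1 / ((1 / 2) * energy c f)) := by
  have hpos : 0 < energy c f := energy_pos hnn hconn (u := a) (v := z) (by simp [ha, hz])
  refine ⟨⟨f, ha, hz, rfl⟩, ?_⟩
  rintro q ⟨h, ha', hz', rfl⟩
  have hle := energy_le_of_harmonicOff hharm hsym hnn (ha'.trans ha.symm) (hz'.trans hz.symm)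
  gcongr

end HarmonicOff

end Network

/-- Dirichlet's principle: in a finite connected network with distinct vertices
`a, z`, the effective resistance `(h₀ z - h₀ a)/‖c d h₀‖` (computed from any
nonconstant voltage `h₀`) equals the supremum of `1/E(h)` over all `h : V → ℝ`
with `h a = 0` and `h z = 1`. -/
theorem stmt_6 {V : Type*} [Fintype V]
    (c : V → V → ℝ) (hsym : ∀ x y, c x y = c y x) (hnn : ∀ x y, 0 ≤ c x y)
    (hconn : ∀ x y : V, Relation.ReflTransGen (fun u v => 0 < c u v) x y)
    (a z : V) (haz : a ≠ z)
    (h₀ : V → ℝ)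
    (hharm : ∀ x, x ≠ a → x ≠ z → ∑ y, c x y * (h₀ y - h₀ x) = 0)
    (hnc : ∃ u v, h₀ u ≠ h₀ v) :
    (h₀ z - h₀ a) / (∑ y, c a y * (h₀ y - h₀ a)) =
      sSup {q : ℝ | ∃ h : V → ℝ, h a = 0 ∧ h z = 1 ∧
        q = 1 / ((1/2) * ∑ x, ∑ y, c x y * (h y - h x) ^ 2)} := by
  change (h₀ z - h₀ a) / laplacian c h₀ a = sSup {q : ℝ | ∃ h : V → ℝ, h a = 0 ∧ h z = 1 ∧
    q = 1 / ((1 / 2) * energy c h)}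
  obtain ⟨x, y, hxy⟩ := hnc
  have hE₀ : 0 < 2 * (h₀ z - h₀ a) * laplacian c h₀ a :=
    energy_eq_of_harmonicOff (f := h₀) hharm hsym haz ▸ energy_pos hnn hconn hxy
  have hd : h₀ z - h₀ a ≠ 0 := by rintro hd; simp [hd] at hE₀
  have hS : laplacian c h₀ a ≠ 0 := by rintro hS; simp [hS] at hE₀
  set u : V → ℝ := fun x => (h₀ x - h₀ a) / (h₀ z - h₀ a)
  have huharm : ∀ x, x ≠ a → x ≠ z → laplacian c u x = 0 := fun x hxa hxz => by
    rw [laplacian_div_sub, show laplacian c h₀ x = 0 from hharm x hxa hxz, zero_div]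
  have hEu : energy c u = 2 * (laplacian c h₀ a / (h₀ z - h₀ a)) := by
    rw [energy_eq_of_harmonicOff huharm hsym haz, laplacian_div_sub]
    simp [u, hd]
  rw [(isGreatest_inv_half_energy_of_harmonicOff huharm hsym hnn hconn (by simp [u])
    (div_self hd)).csSup_eq, hEu]
  field_simp
end

section
/- Thomson's principle: in a finite connected network G with distinct vertices a,z, the effective resistance R_eff(a↔z;G) equals the infimum of the energy E(θ) over all unit-strength flows θ from a to z, and this infimum is attained by the unit current flow. -/
/-!
Let `i = c dh₀` be the current of the voltage `h₀` and `S` its strength at `a`. Summation by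
parts shows that any flow `θ` from `a` to `z` pairs with a potential `h` as
`∑ θ(x,y) (h y - h x) = 2 · strength(θ) · (h z - h a)`. Applied to `i` itself this gives
`∑ c (dh₀)² = 2 S (h₀ z - h₀ a)`, so `S ≠ 0` for nonconstant `h₀` on a connected network, and
`θ₀ = i / S` is a unit flow. Applied to an arbitrary unit flow `θ`, it gives
`∑ r θ θ₀ = 2 R` with `R = (h₀ z - h₀ a) / S`; in particular `E(θ₀) = R`, and expanding
`∑ r (θ - θ₀)² ≥ 0` yields `E(θ) ≥ 2R - E(θ₀) = R`.
-/

open Finset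

namespace Network

variable {V : Type*} {c : V → V → ℝ}

theorem current_antisymm (hsym : ∀ x y, c x y = c y x) (h : V → ℝ) (x y : V) :
    c x y * (h y - h x) = -(c y x * (h x - h y)) := by
  rw [hsym]; ring

variable [Fintype V]

theorem sum_sum_eq_zero_of_antisymm {η : V → V → ℝ} (hη : ∀ x y, η x y = -η y x) :
    ∑ x, ∑ y, η x y = 0 := by
  have h : ∑ x, ∑ y, η x y = -∑ x, ∑ y, η x y := by
    conv_lhs => rw [sum_comm]
    rw [← sum_neg_distrib]
    exact sum_congr rfl fun y _ => by rw [← sum_neg_distrib]; exact sum_congr rfl fun x _ => hη x y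
  linarith

/-- Summation by parts. -/
theorem sum_sum_mul_sub_eq {η : V → V → ℝ} (hη : ∀ x y, η x y = -η y x) (h : V → ℝ) :
    ∑ x, ∑ y, η x y * (h y - h x) = -2 * ∑ x, h x * ∑ y, η x y := by
  have hsymm : ∑ x, ∑ y, η x y * (h y + h x) = 0 :=
    sum_sum_eq_zero_of_antisymm fun x y => by rw [hη x y]; ring
  calc ∑ x, ∑ y, η x y * (h y - h x)
      = ∑ x, ∑ y, (η x y * (h y + h x) - 2 * (h x * η x y)) :=
        sum_congr rfl fun x _ => sum_congr rfl fun y _ => by ring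
    _ = -2 * ∑ x, h x * ∑ y, η x y := by
        simp only [sum_sub_distrib, ← mul_sum, hsymm]; ring

theorem sum_sink_eq_neg_sum_source {θ : V → V → ℝ} (hθ : ∀ x y, θ x y = -θ y x) {a z : V}
    (haz : a ≠ z) (hdiv : ∀ x, x ≠ a → x ≠ z → ∑ y, θ x y = 0) :
    ∑ y, θ z y = -∑ y, θ a y := by
  have h := sum_sum_eq_zero_of_antisymm hθ
  rw [Fintype.sum_eq_add a z haz fun x hx => hdiv x hx.1 hx.2] at h
  linarith

theorem sum_sum_mul_sub_eq_of_flow {θ : V → V → ℝ} (hθ : ∀ x y, θ x y = -θ y x) {a z : V}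
    (haz : a ≠ z) (hdiv : ∀ x, x ≠ a → x ≠ z → ∑ y, θ x y = 0) (h : V → ℝ) :
    ∑ x, ∑ y, θ x y * (h y - h x) = 2 * (∑ y, θ a y) * (h z - h a) := by
  rw [sum_sum_mul_sub_eq hθ,
    Fintype.sum_eq_add a z haz fun x hx => by rw [hdiv x hx.1 hx.2, mul_zero],
    sum_sink_eq_neg_sum_source hθ haz hdiv]
  ring

theorem eq_of_sum_sum_mul_sq_eq_zero (hnn : ∀ x y, 0 ≤ c x y)
    (hconn : ∀ x y : V, Relation.ReflTransGen (fun u v => 0 < c u v) x y) {h : V → ℝ}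
    (h0 : ∑ x, ∑ y, c x y * (h y - h x) ^ 2 = 0) (u v : V) : h u = h v := by
  have hterm_nonneg : ∀ x y, 0 ≤ c x y * (h y - h x) ^ 2 :=
    fun x y => mul_nonneg (hnn x y) (sq_nonneg _)
  have hterm : ∀ x y, c x y * (h y - h x) ^ 2 = 0 := fun x y => by
    rw [Fintype.sum_eq_zero_iff_of_nonneg fun x => sum_nonneg fun y _ => hterm_nonneg x y] at h0
    exact congrFun ((Fintype.sum_eq_zero_iff_of_nonneg (hterm_nonneg x)).mp (congrFun h0 x)) y
  have hedge : ∀ x y, 0 < c x y → h x = h y := fun x y hc => by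
    have := (mul_eq_zero.mp (hterm x y)).resolve_left hc.ne'
    linarith [pow_eq_zero_iff (n := 2) two_ne_zero |>.mp this]
  induction hconn u v with
  | refl => rfl
  | tail _ hc ih => exact ih.trans (hedge _ _ hc)

theorem sum_current_ne_zero (hsym : ∀ x y, c x y = c y x) (hnn : ∀ x y, 0 ≤ c x y)
    (hconn : ∀ x y : V, Relation.ReflTransGen (fun u v => 0 < c u v) x y) {a z : V}
    (haz : a ≠ z) {h : V → ℝ} (hharm : ∀ x, x ≠ a → x ≠ z → ∑ y, c x y * (h y - h x) = 0)
    (hnc : ∃ u v, h u ≠ h v) :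
    ∑ y, c a y * (h y - h a) ≠ 0 := by
  intro hS
  obtain ⟨u, v, huv⟩ := hnc
  refine huv (eq_of_sum_sum_mul_sq_eq_zero hnn hconn ?_ u v)
  have := sum_sum_mul_sub_eq_of_flow (current_antisymm hsym h) haz hharm h
  rw [hS, mul_zero, zero_mul] at this
  simpa only [mul_assoc, ← sq] using this

noncomputable def unitCurrent (c : V → V → ℝ) (h : V → ℝ) (a x y : V) : ℝ :=
  c x y * (h y - h x) / ∑ y, c a y * (h y - h a)

theorem unitCurrent_antisymm (hsym : ∀ x y, c x y = c y x) (h : V → ℝ) (a x y : V) :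
    unitCurrent c h a x y = -unitCurrent c h a y x := by
  rw [unitCurrent, unitCurrent, current_antisymm hsym, neg_div]

theorem unitCurrent_eq_zero {h : V → ℝ} {a x y : V} (hc : c x y = 0) :
    unitCurrent c h a x y = 0 := by
  rw [unitCurrent, hc, zero_mul, zero_div]

theorem sum_unitCurrent_eq_zero {a z : V} {h : V → ℝ}
    (hharm : ∀ x, x ≠ a → x ≠ z → ∑ y, c x y * (h y - h x) = 0) {x : V} (hxa : x ≠ a)
    (hxz : x ≠ z) : ∑ y, unitCurrent c h a x y = 0 := by
  simp only [unitCurrent]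
  rw [← sum_div, hharm x hxa hxz, zero_div]

theorem sum_unitCurrent_source {h : V → ℝ} {a : V} (hS : ∑ y, c a y * (h y - h a) ≠ 0) :
    ∑ y, unitCurrent c h a a y = 1 := by
  simp only [unitCurrent]
  rw [← sum_div, div_self hS]

theorem sum_sum_inv_mul_unitCurrent {a z : V} (haz : a ≠ z) {h : V → ℝ} {θ : V → V → ℝ}
    (hθ : ∀ x y, θ x y = -θ y x) (hsupp : ∀ x y, c x y = 0 → θ x y = 0)
    (hdiv : ∀ x, x ≠ a → x ≠ z → ∑ y, θ x y = 0) (hone : ∑ y, θ a y = 1) :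
    ∑ x, ∑ y, 1 / c x y * θ x y * unitCurrent c h a x y
      = 2 * ((h z - h a) / ∑ y, c a y * (h y - h a)) := by
  have hterm : ∀ x y, 1 / c x y * θ x y * unitCurrent c h a x y
      = θ x y * (h y - h x) / ∑ y, c a y * (h y - h a) := fun x y => by
    by_cases hc : c x y = 0
    · rw [hsupp x y hc]; simp
    · rw [unitCurrent]; field_simp
  simp only [hterm, ← sum_div, sum_sum_mul_sub_eq_of_flow hθ haz hdiv, hone]
  ring

theorem two_mul_sum_sum_mul_sub_le {w : V → V → ℝ} (hw : ∀ x y, 0 ≤ w x y)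
    (θ θ₀ : V → V → ℝ) :
    2 * ∑ x, ∑ y, w x y * θ x y * θ₀ x y - ∑ x, ∑ y, w x y * θ₀ x y ^ 2
      ≤ ∑ x, ∑ y, w x y * θ x y ^ 2 := by
  have h : 0 ≤ ∑ x, ∑ y, w x y * (θ x y - θ₀ x y) ^ 2 :=
    sum_nonneg fun x _ => sum_nonneg fun y _ => mul_nonneg (hw x y) (sq_nonneg _)
  have hexpand : ∑ x, ∑ y, w x y * (θ x y - θ₀ x y) ^ 2 = ∑ x, ∑ y, w x y * θ x y ^ 2
      - 2 * ∑ x, ∑ y, w x y * θ x y * θ₀ x y + ∑ x, ∑ y, w x y * θ₀ x y ^ 2 := by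
    simp only [mul_sum, ← sum_sub_distrib, ← sum_add_distrib]
    exact sum_congr rfl fun x _ => sum_congr rfl fun y _ => by ring
  linarith

end Network

open Network in
/-- Thomson's principle: in a finite connected network with distinct vertices
`a, z`, the effective resistance `(h₀ z - h₀ a)/‖c d h₀‖` (computed from any
nonconstant voltage `h₀`) is the least element of the set of energies of
unit-strength flows from `a` to `z`; in particular the infimum is attained. -/
theorem stmt_7 {V : Type*} [Fintype V]
    (c : V → V → ℝ) (hsym : ∀ x y, c x y = c y x) (hnn : ∀ x y, 0 ≤ c x y)
    (hconn : ∀ x y : V, Relation.ReflTransGen (fun u v => 0 < c u v) x y)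
    (a z : V) (haz : a ≠ z)
    (h₀ : V → ℝ)
    (hharm : ∀ x, x ≠ a → x ≠ z → ∑ y, c x y * (h₀ y - h₀ x) = 0)
    (hnc : ∃ u v, h₀ u ≠ h₀ v) :
    IsLeast {q : ℝ | ∃ θ : V → V → ℝ, (∀ x y, θ x y = - θ y x) ∧
        (∀ x y, c x y = 0 → θ x y = 0) ∧
        (∀ x, x ≠ a → x ≠ z → ∑ y, θ x y = 0) ∧
        (∑ y, θ a y = 1) ∧
        q = (1/2) * ∑ x, ∑ y, (1 / c x y) * θ x y ^ 2}
      ((h₀ z - h₀ a) / (∑ y, c a y * (h₀ y - h₀ a))) := by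
  have hS := sum_current_ne_zero hsym hnn hconn haz hharm hnc
  have hθ₀ := unitCurrent_antisymm hsym h₀ a
  have hpair₀ := sum_sum_inv_mul_unitCurrent (h := h₀) haz hθ₀ (fun _ _ => unitCurrent_eq_zero)
    (fun _ => sum_unitCurrent_eq_zero hharm) (sum_unitCurrent_source hS)
  simp only [mul_assoc, ← sq] at hpair₀
  refine ⟨⟨unitCurrent c h₀ a, hθ₀, fun _ _ => unitCurrent_eq_zero,
    fun _ => sum_unitCurrent_eq_zero hharm, sum_unitCurrent_source hS, by linarith⟩, ?_⟩
  rintro q ⟨θ, hθ, hsupp, hdiv, hone, rfl⟩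
  have hpair := sum_sum_inv_mul_unitCurrent (h := h₀) haz hθ hsupp hdiv hone
  have hle := two_mul_sum_sum_mul_sub_le (fun x y => one_div_nonneg.mpr (hnn x y)) θ
    (unitCurrent c h₀ a)
  linarith
end

section
/- For an annulus crossing estimate in the plane: if γ is a piecewise C¹ curve in ℂ that crosses the annulus {z : r < |z−z₀| < R} (i.e., it intersects both the closed disk of radius r and the complement of the open disk of radius R around z₀), then ∫_γ |dz|/|z−z₀| ≥ log(R/r). -/
/-!
Along an arc avoiding `z₀`, `|d log |γ - z₀|| ≤ |γ'| / |γ - z₀|`, so the integral dominates the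
variation of `log |γ - z₀|` over any such arc. Let `t₀` be the parameter between `t₁` and `t₂`,
as close to `t₂` as possible, with `|γ t₀ - z₀| = r`. Between `t₀` and `t₂` the curve stays at
distance `≥ r` from `z₀`, and `log |γ - z₀|` climbs from `log r` to at least `log R`.
-/

open Set MeasureTheory Real
open scoped RealInnerProductSpace Interval

theorem norm_sub_le_integral_uIoc_of_hasDerivAt_off_countable
    {E : Type*} [NormedAddCommGroup E] [NormedSpace ℝ E] [CompleteSpace E]
    {f f' : ℝ → E} {B : ℝ → ℝ} {a b : ℝ} {s : Set ℝ} (hs : s.Countable)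
    (hfc : ContinuousOn f [[a, b]])
    (hfd : ∀ t ∈ Ioo (min a b) (max a b) \ s, HasDerivAt f (f' t) t)
    (hfB : ∀ t ∈ Ioo (min a b) (max a b) \ s, ‖f' t‖ ≤ B t)
    (hBi : IntervalIntegrable B volume a b) :
    ‖f b - f a‖ ≤ ∫ t in Ι a b, B t := by
  -- Integrating `deriv f` rather than `f'` makes the integrand measurable for free.
  have hderiv_le : ∀ᵐ t ∂volume.restrict (Ι a b), ‖deriv f t‖ ≤ B t := by
    rw [ae_restrict_iff' measurableSet_uIoc]
    filter_upwards [(hs.insert (max a b)).ae_notMem volume] with t hts ht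
    rw [mem_insert_iff, not_or] at hts
    have ht' : t ∈ Ioo (min a b) (max a b) \ s := ⟨⟨ht.1, lt_of_le_of_ne ht.2 hts.1⟩, hts.2⟩
    exact (hfd t ht').deriv ▸ hfB t ht'
  have hint : IntervalIntegrable (deriv f) volume a b :=
    hBi.mono_fun' (aestronglyMeasurable_deriv f _) hderiv_le
  rw [← integral_eq_of_hasDerivAt_off_countable f (deriv f) hs hfc
    (fun t ht => (hfd t ht).differentiableAt.hasDerivAt) hint]
  exact intervalIntegral.norm_integral_le_integral_norm_uIoc.trans
    (integral_mono_ae hint.def'.norm hBi.def' hderiv_le)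

section InnerProductSpace

variable {F : Type*} [NormedAddCommGroup F] [InnerProductSpace ℝ F]

theorem HasDerivAt.log_norm {w : ℝ → F} {w' : F} {t : ℝ} (hw : HasDerivAt w w' t)
    (h0 : w t ≠ 0) :
    HasDerivAt (fun u => Real.log ‖w u‖) (⟪w t, w'⟫ / ‖w t‖ ^ 2) t := by
  have hlog_sq : (fun u => Real.log ‖w u‖) = fun u => Real.log (‖w u‖ ^ 2) / 2 := by
    funext u
    rw [Real.log_pow]
    ring
  rw [hlog_sq]
  refine ((hw.norm_sq.log (by positivity)).div_const 2).congr_deriv ?_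
  field_simp

theorem abs_inner_div_norm_sq_le (x v : F) : |⟪x, v⟫ / ‖x‖ ^ 2| ≤ ‖v‖ / ‖x‖ := by
  rcases eq_or_ne x 0 with rfl | hx
  · simp
  have hpos : 0 < ‖x‖ := norm_pos_iff.2 hx
  calc |⟪x, v⟫ / ‖x‖ ^ 2| = |⟪x, v⟫| / ‖x‖ ^ 2 := by
        rw [abs_div, abs_of_nonneg (by positivity : (0 : ℝ) ≤ ‖x‖ ^ 2)]
    _ ≤ ‖x‖ * ‖v‖ / ‖x‖ ^ 2 := by gcongr; exact abs_real_inner_le_norm x v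
    _ = ‖v‖ / ‖x‖ := by field_simp

theorem abs_log_norm_sub_le_integral {w w' : ℝ → F} {a b : ℝ} {s : Set ℝ} (hs : s.Countable)
    (hc : ContinuousOn w [[a, b]])
    (hd : ∀ t ∈ Ioo (min a b) (max a b) \ s, HasDerivAt w (w' t) t)
    (h0 : ∀ t ∈ [[a, b]], w t ≠ 0)
    (hi : IntervalIntegrable (fun t => ‖w' t‖ / ‖w t‖) volume a b) :
    |log ‖w b‖ - log ‖w a‖| ≤ ∫ t in Ι a b, ‖w' t‖ / ‖w t‖ :=
  norm_sub_le_integral_uIoc_of_hasDerivAt_off_countable hs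
    (hc.norm.log fun t ht => norm_ne_zero_iff.2 (h0 t ht))
    (fun t ht => (hd t ht).log_norm (h0 t (Ioo_subset_Icc_self ht.1)))
    (fun _ _ => abs_inner_div_norm_sq_le _ _) hi

end InnerProductSpace

theorem ContinuousOn.exists_mem_uIcc_eq_and_le_on_uIcc {f : ℝ → ℝ} {a b r : ℝ}
    (hf : ContinuousOn f [[a, b]]) (ha : f a ≤ r) (hb : r ≤ f b) :
    ∃ c ∈ [[a, b]], f c = r ∧ ∀ t ∈ [[c, b]], r ≤ f t := by
  have hS : IsCompact ([[a, b]] ∩ f ⁻¹' Iic r) :=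
    isCompact_uIcc.of_isClosed_subset
      (hf.preimage_isClosed_of_isClosed isClosed_Icc isClosed_Iic) inter_subset_left
  obtain ⟨c, hcS, hmin⟩ := hS.exists_isMinOn ⟨a, left_mem_uIcc, ha⟩
    (continuous_id.dist continuous_const).continuousOn (f := fun t => dist t b)
  have hsub : [[c, b]] ⊆ [[a, b]] := uIcc_subset_uIcc hcS.1 right_mem_uIcc
  -- `c` is the point of `{f ≤ r}` closest to `b`, and `[[c, b]]` holds no closer one.
  have eq_of_le : ∀ t ∈ [[c, b]], f t ≤ r → t = c := fun t ht hft => by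
    have hsplit := dist_add_dist_of_mem_segment (by rwa [segment_eq_uIcc])
    have hcloser : dist c b ≤ dist t b := hmin ⟨hsub ht, hft⟩
    exact (dist_le_zero.1 (by linarith)).symm
  obtain ⟨t', ht', hft'⟩ := intermediate_value_uIcc (hf.mono hsub) (mem_uIcc_of_le hcS.2 hb)
  have hfc : f c = r := eq_of_le t' ht' hft'.le ▸ hft'
  refine ⟨c, hcS.1, hfc, fun t ht => not_lt.1 fun hlt => hlt.ne ?_⟩
  rw [eq_of_le t ht hlt.le, hfc]

theorem stmt_14_general (z₀ : ℂ) (r R : ℝ) (hr : 0 < r) (hrR : r < R)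
    (a b : ℝ)
    (γ γ' : ℝ → ℂ) (s : Finset ℝ)
    (hcont : ContinuousOn γ (Set.Icc a b))
    (hderiv : ∀ t ∈ Set.Icc a b \ (s : Set ℝ), HasDerivAt γ (γ' t) t)
    (hint : IntervalIntegrable (fun t => ‖γ' t‖ / ‖γ t - z₀‖) MeasureTheory.volume a b)
    (t₁ : ℝ) (ht₁ : t₁ ∈ Set.Icc a b) (h₁ : ‖γ t₁ - z₀‖ ≤ r)
    (t₂ : ℝ) (ht₂ : t₂ ∈ Set.Icc a b) (h₂ : R ≤ ‖γ t₂ - z₀‖) :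
    Real.log (R / r) ≤ ∫ t in a..b, ‖γ' t‖ / ‖γ t - z₀‖ := by
  obtain ⟨t₀, ht₀, hr₀, hge⟩ :=
    ContinuousOn.exists_mem_uIcc_eq_and_le_on_uIcc (f := fun t => ‖γ t - z₀‖)
      ((hcont.mono (uIcc_subset_Icc ht₁ ht₂)).sub continuousOn_const).norm h₁ (hrR.le.trans h₂)
  replace ht₀ : t₀ ∈ Icc a b := uIcc_subset_Icc ht₁ ht₂ ht₀
  have hsub : [[t₀, t₂]] ⊆ Icc a b := uIcc_subset_Icc ht₀ ht₂
  have hlog := abs_log_norm_sub_le_integral (w := fun t => γ t - z₀) s.countable_toSet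
    ((hcont.mono hsub).sub continuousOn_const)
    (fun t ht => (hderiv t ⟨hsub (Ioo_subset_Icc_self ht.1), ht.2⟩).sub_const z₀)
    (fun t ht => norm_pos_iff.1 (hr.trans_le (hge t ht)))
    (hint.mono_set (uIcc_subset_uIcc (Icc_subset_uIcc ht₀) (Icc_subset_uIcc ht₂)))
  have hmono : ∫ t in Ι t₀ t₂, ‖γ' t‖ / ‖γ t - z₀‖ ≤ ∫ t in a..b, ‖γ' t‖ / ‖γ t - z₀‖ := by
    rw [intervalIntegral.integral_of_le (ht₁.1.trans ht₁.2)]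
    exact setIntegral_mono_set hint.1 (ae_of_all _ fun t => by positivity)
      (Ioc_subset_Ioc (le_min ht₀.1 ht₂.1) (max_le ht₀.2 ht₂.2)).eventuallyLE
  calc log (R / r) = log R - log ‖γ t₀ - z₀‖ := by rw [log_div (hr.trans hrR).ne' hr.ne', hr₀]
    _ ≤ log ‖γ t₂ - z₀‖ - log ‖γ t₀ - z₀‖ := by gcongr; linarith
    _ ≤ _ := (le_abs_self _).trans hlog
    _ ≤ _ := hmono

/-- Annulus crossing estimate: if a piecewise `C¹` curve `γ : [a,b] → ℂ`
(continuous, differentiable off a finite set, with integrable weighted speed)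
crosses the annulus `{z : r < |z - z₀| < R}`, i.e. it passes through a point at
distance `≤ r` and a point at distance `≥ R` from `z₀`, then
`∫ |dz|/|z - z₀| ≥ log (R/r)`. -/
theorem stmt_14 (z₀ : ℂ) (r R : ℝ) (hr : 0 < r) (hrR : r < R)
    (a b : ℝ) (hab : a ≤ b)
    (γ γ' : ℝ → ℂ) (s : Finset ℝ)
    (hcont : ContinuousOn γ (Set.Icc a b))
    (hderiv : ∀ t ∈ Set.Icc a b \ (s : Set ℝ), HasDerivAt γ (γ' t) t)
    (hint : IntervalIntegrable (fun t => ‖γ' t‖ / ‖γ t - z₀‖) MeasureTheory.volume a b)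
    (t₁ : ℝ) (ht₁ : t₁ ∈ Set.Icc a b) (h₁ : ‖γ t₁ - z₀‖ ≤ r)
    (t₂ : ℝ) (ht₂ : t₂ ∈ Set.Icc a b) (h₂ : R ≤ ‖γ t₂ - z₀‖) :
    Real.log (R / r) ≤ ∫ t in a..b, ‖γ' t‖ / ‖γ t - z₀‖ :=
  stmt_14_general z₀ r R hr hrR a b γ γ' s hcont hderiv hint t₁ ht₁ h₁ t₂ ht₂ h₂
end
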